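/- arXiv:2203.07898 — 4 statements merged into one kernel-verified Lean document; each statement's English description precedes it below -/
import Mathlib

section
/- For all curves π = (π₁,…,π_n) and σ = (σ₁,…,σ_m) in ℝ^d and all translations τ, τ' ∈ ℝ^d, |d_DTW(π, σ+τ) − d_DTW(π, σ+τ')| ≤ (n+m−1)·‖τ − τ'‖; that is, the function τ ↦ d_DTW(π, σ+τ) is (n+m−1)-Lipschitz with respect to the norm ‖·‖. -/
/-!
Along a fixed traversal, replacing `σ + τ'` by `σ + τ` changes each summand `‖π i - σ j - τ‖`
by at most `‖τ - τ'‖`, so the cost changes by at most `L · ‖τ - τ'‖`, where `L` is the number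
of steps. Since `i + j` starts at `2`, ends at `n + m` and grows by at least one per step,
`L ≤ n + m - 1`. Taking infima over all traversals gives the bound for `d_DTW`.
-/

open Finset

/-- A traversal of two curves of lengths `n` and `m` (1-indexed): a nonempty list of
index pairs starting at `(1,1)`, ending at `(n,m)`, where each step increases the first
index, the second index, or both, by one. -/
def IsTraversal (n m : ℕ) (T : List (ℕ × ℕ)) : Prop :=
  T.head? = some (1, 1) ∧ T.getLast? = some (n, m) ∧
  ∀ ℓ : ℕ, ℓ + 1 < T.length →
    T.getD (ℓ + 1) (0, 0) = ((T.getD ℓ (0, 0)).1 + 1, (T.getD ℓ (0, 0)).2) ∨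
    T.getD (ℓ + 1) (0, 0) = ((T.getD ℓ (0, 0)).1, (T.getD ℓ (0, 0)).2 + 1) ∨
    T.getD (ℓ + 1) (0, 0) = ((T.getD ℓ (0, 0)).1 + 1, (T.getD ℓ (0, 0)).2 + 1)

/-- The dynamic time warping distance of two curves `π = (π 1, …, π n)` and
`σ = (σ 1, …, σ m)`: the minimum, over all traversals, of the sum of the distances
of the paired points. -/
noncomputable def dtw {E : Type*} [NormedAddCommGroup E] (n m : ℕ) (π σ : ℕ → E) : ℝ :=
  sInf {c : ℝ | ∃ T : List (ℕ × ℕ), IsTraversal n m T ∧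
    (T.map fun p => ‖π p.1 - σ p.2‖).sum = c}

theorem csInf_image_le_csInf_image_add {α : Type*} {s : Set α} {f g : α → ℝ} {C : ℝ}
    (hf : BddBelow (f '' s)) (hC : 0 ≤ C) (hfg : ∀ a ∈ s, f a ≤ g a + C) :
    sInf (f '' s) ≤ sInf (g '' s) + C := by
  rcases s.eq_empty_or_nonempty with rfl | hs
  -- both infima are the junk value `sInf ∅ = 0`
  · simpa using hC
  · refine sub_le_iff_le_add.mp (le_csInf (hs.image g) ?_)
    rintro _ ⟨a, ha, rfl⟩
    exact sub_le_iff_le_add.mpr ((csInf_le hf (Set.mem_image_of_mem f ha)).trans (hfg a ha))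

theorem List.sum_map_le_sum_map_add_length_mul {ι : Type*} {l : List ι} {f g : ι → ℝ} {c : ℝ}
    (h : ∀ i ∈ l, f i ≤ g i + c) : (l.map f).sum ≤ (l.map g).sum + l.length * c := by
  calc (l.map f).sum ≤ (l.map fun i => g i + c).sum := List.sum_le_sum h
    _ = (l.map g).sum + l.length * c := by simp [List.sum_map_add]

theorem IsTraversal.add_two_le_fst_add_snd {n m : ℕ} {T : List (ℕ × ℕ)} (hT : IsTraversal n m T) :
    ∀ ℓ < T.length, ℓ + 2 ≤ (T.getD ℓ (0, 0)).1 + (T.getD ℓ (0, 0)).2 := by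
  obtain ⟨hhead, -, hstep⟩ := hT
  intro ℓ
  induction ℓ with
  | zero =>
    intro _
    cases T with
    | nil => simp at hhead
    | cons p T => simp_all
  | succ ℓ ih =>
    intro hℓ
    have := ih (by omega)
    rcases hstep ℓ hℓ with h | h | h <;> rw [h] <;> dsimp only <;> omega

theorem IsTraversal.length_add_one_le {n m : ℕ} {T : List (ℕ × ℕ)} (hT : IsTraversal n m T) :
    T.length + 1 ≤ n + m := by
  have hlen : 0 < T.length := List.length_pos_iff.mpr (by rintro rfl; simp [IsTraversal] at hT)
  have hlast : T.getD (T.length - 1) (0, 0) = (n, m) := by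
    rw [List.getD_eq_getElem?_getD, ← List.getLast?_eq_getElem?, hT.2.1, Option.getD_some]
  have := hT.add_two_le_fst_add_snd (T.length - 1) (by omega)
  rw [hlast] at this
  omega

section

variable {E : Type*} [NormedAddCommGroup E]

noncomputable def traversalCost (π σ : ℕ → E) (T : List (ℕ × ℕ)) : ℝ :=
  (T.map fun p => ‖π p.1 - σ p.2‖).sum

theorem dtw_eq_sInf_image (n m : ℕ) (π σ : ℕ → E) :
    dtw n m π σ = sInf (traversalCost π σ '' {T | IsTraversal n m T}) :=
  rfl

theorem traversalCost_nonneg (π σ : ℕ → E) (T : List (ℕ × ℕ)) : 0 ≤ traversalCost π σ T :=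
  List.sum_nonneg fun _ hx => by
    obtain ⟨p, -, rfl⟩ := List.mem_map.mp hx
    exact norm_nonneg _

theorem traversalCost_translate_le (π σ : ℕ → E) (τ τ' : E) (T : List (ℕ × ℕ)) :
    traversalCost π (fun j => σ j + τ) T ≤
      traversalCost π (fun j => σ j + τ') T + T.length * ‖τ - τ'‖ := by
  refine List.sum_map_le_sum_map_add_length_mul fun p _ => ?_
  calc ‖π p.1 - (σ p.2 + τ)‖ = ‖(π p.1 - (σ p.2 + τ')) + (τ' - τ)‖ := by congr 1; abel
    _ ≤ ‖π p.1 - (σ p.2 + τ')‖ + ‖τ - τ'‖ := by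
      rw [norm_sub_rev τ]; exact norm_add_le _ _

theorem dtw_translate_le_add {n : ℕ} (hn : 1 ≤ n) (m : ℕ) (π σ : ℕ → E) (τ τ' : E) :
    dtw n m π (fun j => σ j + τ) ≤
      dtw n m π (fun j => σ j + τ') + ((n : ℝ) + m - 1) * ‖τ - τ'‖ := by
  rw [dtw_eq_sInf_image, dtw_eq_sInf_image]
  refine csInf_image_le_csInf_image_add ⟨0, ?_⟩ ?_ fun T hT => ?_
  · rintro _ ⟨T, -, rfl⟩
    exact traversalCost_nonneg _ _ T
  · have hn' : (1 : ℝ) ≤ n := by exact_mod_cast hn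
    exact mul_nonneg (by linarith [(m.cast_nonneg : (0 : ℝ) ≤ m)]) (norm_nonneg _)
  · have hlen : (T.length : ℝ) + 1 ≤ n + m := by exact_mod_cast hT.length_add_one_le
    exact (traversalCost_translate_le π σ τ τ' T).trans (by gcongr; linarith)

end

theorem dtw_translate_lipschitz_general {E : Type*} [NormedAddCommGroup E] (n m : ℕ)
    (hn : 1 ≤ n) (π σ : ℕ → E) (τ τ' : E) :
    |dtw n m π (fun j => σ j + τ) - dtw n m π (fun j => σ j + τ')| ≤
      ((n : ℝ) + m - 1) * ‖τ - τ'‖ := by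
  have h := dtw_translate_le_add hn m π σ τ τ'
  have h' := dtw_translate_le_add hn m π σ τ' τ
  rw [norm_sub_rev] at h'
  exact abs_sub_le_iff.mpr ⟨by linarith, by linarith⟩

/-- The map `τ ↦ d_DTW(π, σ + τ)` is `(n + m - 1)`-Lipschitz. -/
theorem dtw_translate_lipschitz {E : Type*} [NormedAddCommGroup E] (n m : ℕ)
    (hn : 1 ≤ n) (hm : 1 ≤ m) (π σ : ℕ → E) (τ τ' : E) :
    |dtw n m π (fun j => σ j + τ) - dtw n m π (fun j => σ j + τ')| ≤
      ((n : ℝ) + m - 1) * ‖τ - τ'‖ :=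
  dtw_translate_lipschitz_general n m hn π σ τ τ'
end

section
/- Let π = (π₁,…,π_n) and σ = (σ₁,…,σ_m) be curves in ℝ^d with m ≤ n, let δ > 0 and τ ∈ ℝ^d, and suppose d_DTW(π, σ+τ) ≤ δ. Then the number of distinct index pairs (i,j) ∈ [n]×[m] with ‖(π_i − σ_j) − τ‖ ≤ 2δ/n is at least n/2. -/
/-!
Any traversal visits at least `n` distinct index pairs of `[n] × [m]`, and by Markov's
inequality its cost is at least `2δ/n` times the number of visited pairs with
`‖π_i - σ_j - τ‖ > 2δ/n`. Hence `d_DTW(π, σ + τ) ≥ (2δ/n)(n - k)`, where `k` counts the close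
pairs of `[n] × [m]`, and `d_DTW ≤ δ` forces `k ≥ n/2`.
-/

open Finset

namespace IsTraversal

variable {n m : ℕ} {T : List (ℕ × ℕ)}

theorem length_pos (hT : IsTraversal n m T) : 0 < T.length := by
  rcases T with _ | _
  · simp [IsTraversal] at hT
  · simp

theorem getD_zero (hT : IsTraversal n m T) : T.getD 0 (0, 0) = (1, 1) := by
  have h := hT.1
  rw [List.head?_eq_getElem?, List.getElem?_eq_getElem hT.length_pos] at h
  rw [List.getD_eq_getElem _ _ hT.length_pos, Option.some_injective _ h]

theorem getD_length_sub_one (hT : IsTraversal n m T) :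
    T.getD (T.length - 1) (0, 0) = (n, m) := by
  have hlast : T.length - 1 < T.length := Nat.sub_lt hT.length_pos one_pos
  have h := hT.2.1
  rw [List.getLast?_eq_getElem?, List.getElem?_eq_getElem hlast] at h
  rw [List.getD_eq_getElem _ _ hlast, Option.some_injective _ h]

theorem getD_mono (hT : IsTraversal n m T) {ℓ ℓ' : ℕ} (hle : ℓ ≤ ℓ') (hlt : ℓ' < T.length) :
    (T.getD ℓ (0, 0)).1 ≤ (T.getD ℓ' (0, 0)).1 ∧ (T.getD ℓ (0, 0)).2 ≤ (T.getD ℓ' (0, 0)).2 ∧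
      (T.getD ℓ' (0, 0)).1 ≤ (T.getD ℓ (0, 0)).1 + (ℓ' - ℓ) ∧
      (T.getD ℓ (0, 0)).1 + (T.getD ℓ (0, 0)).2 + (ℓ' - ℓ) ≤
        (T.getD ℓ' (0, 0)).1 + (T.getD ℓ' (0, 0)).2 := by
  induction ℓ', hle using Nat.le_induction with
  | base => omega
  | succ k hk ih =>
    have := ih (by omega)
    rcases hT.2.2 k hlt with h | h | h <;> rw [h] <;> dsimp only <;> omega

theorem le_length (hT : IsTraversal n m T) : n ≤ T.length := by
  have hpos := hT.length_pos
  have h := hT.getD_mono (Nat.zero_le _) (Nat.sub_lt hpos one_pos)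
  rw [hT.getD_zero, hT.getD_length_sub_one] at h
  dsimp only at h
  omega

theorem nodup (hT : IsTraversal n m T) : T.Nodup := by
  refine List.pairwise_iff_getElem.2 fun i j hi hj hij heq => ?_
  have h := hT.getD_mono hij.le hj
  rw [List.getD_eq_getElem _ _ hi, List.getD_eq_getElem _ _ hj, heq] at h
  omega

theorem mem_product (hT : IsTraversal n m T) {p : ℕ × ℕ} (hp : p ∈ T) :
    p ∈ Icc 1 n ×ˢ Icc 1 m := by
  obtain ⟨i, hi, rfl⟩ := List.mem_iff_getElem.1 hp
  have h₁ := hT.getD_mono (Nat.zero_le i) hi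
  have h₂ := hT.getD_mono (Nat.le_sub_one_of_lt hi) (Nat.sub_lt hT.length_pos one_pos)
  rw [hT.getD_zero, List.getD_eq_getElem _ _ hi] at h₁
  rw [hT.getD_length_sub_one, List.getD_eq_getElem _ _ hi] at h₂
  simp only [Finset.mem_product, mem_Icc]
  omega

theorem mul_sub_card_le_sum (hT : IsTraversal n m T) (f : ℕ × ℕ → ℝ) (hf : ∀ p, 0 ≤ f p)
    {t : ℝ} (ht : 0 ≤ t) :
    t * (n - #{p ∈ Icc 1 n ×ˢ Icc 1 m | f p ≤ t}) ≤ (T.map f).sum := by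
  have hsplit := card_filter_add_card_filter_not (s := T.toFinset) (fun p => f p ≤ t)
  set far := {p ∈ T.toFinset | ¬ f p ≤ t}
  have hcount : (n : ℝ) - #{p ∈ Icc 1 n ×ˢ Icc 1 m | f p ≤ t} ≤ #far := by
    have hclose : #{p ∈ T.toFinset | f p ≤ t} ≤ #{p ∈ Icc 1 n ×ˢ Icc 1 m | f p ≤ t} :=
      card_le_card <| filter_subset_filter _ fun p hp => hT.mem_product (List.mem_toFinset.1 hp)
    rw [List.toFinset_card_of_nodup hT.nodup] at hsplit
    have := hT.le_length
    rw [sub_le_iff_le_add]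
    exact_mod_cast (by omega : n ≤ #far + #{p ∈ Icc 1 n ×ˢ Icc 1 m | f p ≤ t})
  calc t * (n - #{p ∈ Icc 1 n ×ˢ Icc 1 m | f p ≤ t})
      ≤ #far * t := by rw [mul_comm]; exact mul_le_mul_of_nonneg_right hcount ht
    _ ≤ ∑ p ∈ far, f p := by
      simpa using card_nsmul_le_sum far f t fun p hp => (not_le.1 (mem_filter.1 hp).2).le
    _ ≤ ∑ p ∈ T.toFinset, f p :=
      sum_le_sum_of_subset_of_nonneg (filter_subset _ _) fun p _ _ => hf p
    _ = (T.map f).sum := List.sum_toFinset f hT.nodup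

end IsTraversal

theorem isTraversal_diagonal {n m : ℕ} (hn : 1 ≤ n) (hm : 1 ≤ m) :
    IsTraversal n m ((List.range (max n m)).map fun i => (min (i + 1) n, min (i + 1) m)) := by
  have hget : ∀ i < max n m, ((List.range (max n m)).map
      fun i => (min (i + 1) n, min (i + 1) m)).getD i (0, 0) = (min (i + 1) n, min (i + 1) m) :=
    fun i hi => by simp [hi]
  refine ⟨?_, ?_, fun ℓ hℓ => ?_⟩
  · simp [List.head?_eq_getElem?, show 0 < max n m by omega, hn, hm]
  · simp [List.getLast?_eq_getElem?, show max n m - 1 < max n m by omega]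
    omega
  · simp only [List.length_map, List.length_range] at hℓ
    rw [hget ℓ (by omega), hget (ℓ + 1) hℓ]
    simp only [Prod.mk.injEq]
    omega

theorem le_dtw {E : Type*} [NormedAddCommGroup E] {n m : ℕ} (hn : 1 ≤ n) (hm : 1 ≤ m)
    (π σ : ℕ → E) {b : ℝ}
    (hb : ∀ T, IsTraversal n m T → b ≤ (T.map fun p => ‖π p.1 - σ p.2‖).sum) :
    b ≤ dtw n m π σ :=
  le_csInf ⟨_, _, isTraversal_diagonal hn hm, rfl⟩ fun _ ⟨T, hT, hc⟩ => hc ▸ hb T hT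

open scoped Classical in
/-- If `m ≤ n`, `δ > 0` and `d_DTW(π, σ + τ) ≤ δ`, then at least `n/2` distinct index pairs
`(i, j) ∈ [n] × [m]` satisfy `‖(π_i - σ_j) - τ‖ ≤ 2δ/n`. -/
theorem many_close_pairs {E : Type*} [NormedAddCommGroup E] (n m : ℕ)
    (hm : 1 ≤ m) (hmn : m ≤ n) (π σ : ℕ → E) (δ : ℝ) (hδ : 0 < δ) (τ : E)
    (h : dtw n m π (fun j => σ j + τ) ≤ δ) :
    (n : ℝ) / 2 ≤
      (((Finset.Icc 1 n ×ˢ Finset.Icc 1 m).filter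
        (fun p : ℕ × ℕ => ‖(π p.1 - σ p.2) - τ‖ ≤ 2 * δ / n)).card : ℝ) := by
  set k := #{p ∈ Icc 1 n ×ˢ Icc 1 m | ‖(π p.1 - σ p.2) - τ‖ ≤ 2 * δ / n}
  have hn : (0 : ℝ) < n := by exact_mod_cast hm.trans hmn
  have hcost : 2 * δ / n * (n - k) ≤ δ := by
    refine (le_dtw (hm.trans hmn) hm π _ fun T hT => ?_).trans h
    simpa only [sub_add_eq_sub_sub] using
      hT.mul_sub_card_le_sum (fun p => ‖π p.1 - (σ p.2 + τ)‖) (fun _ => norm_nonneg _)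
        (by positivity : 0 ≤ 2 * δ / n)
  rw [div_mul_eq_mul_div, div_le_iff₀ hn] at hcost
  nlinarith
end

section
/- Let π = (π₁,…,π_n) and σ = (σ₁,…,σ_m) be curves in ℝ² with m ≤ n, and let δ > 0 and ε > 0. If there exists τ ∈ ℝ² with d_DTW(π, σ+τ) ≤ δ, then there exists a point q ∈ ℝ² both of whose coordinates are integer multiples of (ε·δ)/(4n) such that d_DTW(π, σ+q) ≤ (1+ε)·δ. -/
/-!
A traversal of curves of lengths `n` and `m` has fewer than `n + m` pairs, since every step
raises the index sum by at least one. Hence moving the translation from `τ` to `q` changes the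
cost of each traversal, and so the DTW distance, by at most `(n + m)‖τ - q‖ ≤ 2n‖τ - q‖`.
Rounding the coordinates of `τ` to the grid of mesh `g = εδ/(4n)` gives
`‖τ - q‖ ≤ √2 g/2 ≤ g`, so the distance grows by at most `εδ/2`.
-/

open Finset

namespace IsTraversal

variable {n m : ℕ} {T : List (ℕ × ℕ)}

theorem add_two_le_fst_add_snd_s7 (hT : IsTraversal n m T) {ℓ : ℕ} (hℓ : ℓ < T.length) :
    ℓ + 2 ≤ (T.getD ℓ (0, 0)).1 + (T.getD ℓ (0, 0)).2 := by
  obtain ⟨hhead, -, hstep⟩ := hT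
  induction ℓ with
  | zero =>
    obtain ⟨p, l, rfl⟩ := List.exists_cons_of_length_pos hℓ
    simp_all
  | succ k ih =>
    have := ih (by omega)
    rcases hstep k hℓ with h | h | h <;> rw [h] <;> dsimp only <;> omega

theorem length_lt (hT : IsTraversal n m T) : T.length < n + m := by
  have hlast : T.getD (T.length - 1) (0, 0) = (n, m) := by
    rw [List.getD_eq_getElem?_getD, ← List.getLast?_eq_getElem?, hT.2.1]; rfl
  have hpos : 0 < T.length := List.length_pos_iff.mpr (by rintro rfl; simp [IsTraversal] at hT)
  have := hT.add_two_le_fst_add_snd_s7 (ℓ := T.length - 1) (by omega)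
  rw [hlast] at this
  omega

end IsTraversal

section Translation

variable {E : Type*} [NormedAddCommGroup E]

theorem sum_map_norm_sub_add_le (T : List (ℕ × ℕ)) (π σ : ℕ → E) (τ q : E) :
    (T.map fun p => ‖π p.1 - (σ p.2 + q)‖).sum ≤
      (T.map fun p => ‖π p.1 - (σ p.2 + τ)‖).sum + T.length * ‖τ - q‖ := by
  induction T with
  | nil => simp
  | cons a l ih =>
    have hhead : ‖π a.1 - (σ a.2 + q)‖ ≤ ‖π a.1 - (σ a.2 + τ)‖ + ‖τ - q‖ := by
      rw [← sub_sub, ← sub_sub]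
      exact norm_sub_le_norm_sub_add_norm_sub _ _ _
    simp only [List.map_cons, List.sum_cons, List.length_cons]
    push_cast
    linarith

theorem List.sum_map_norm_nonneg {α : Type*} (l : List α) (f : α → E) :
    0 ≤ (l.map fun a => ‖f a‖).sum :=
  List.sum_nonneg fun _ hx => by
    obtain ⟨a, -, rfl⟩ := List.mem_map.mp hx
    exact norm_nonneg _

variable {n m : ℕ} {π σ : ℕ → E}

theorem dtw_nonneg : 0 ≤ dtw n m π σ :=
  Real.sInf_nonneg <| by
    rintro _ ⟨T, -, rfl⟩
    exact T.sum_map_norm_nonneg _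

theorem dtw_le_sum_map {T : List (ℕ × ℕ)} (hT : IsTraversal n m T) :
    dtw n m π σ ≤ (T.map fun p => ‖π p.1 - σ p.2‖).sum :=
  csInf_le ⟨0, by rintro _ ⟨T, -, rfl⟩; exact T.sum_map_norm_nonneg _⟩ ⟨T, hT, rfl⟩

theorem dtw_add_le_dtw_add (π σ : ℕ → E) (τ q : E) :
    dtw n m π (fun j => σ j + q) ≤ dtw n m π (fun j => σ j + τ) + (n + m) * ‖τ - q‖ := by
  by_cases hT : ∃ T, IsTraversal n m T
  · obtain ⟨T₀, hT₀⟩ := hT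
    rw [← sub_le_iff_le_add]
    refine le_csInf ⟨_, T₀, hT₀, rfl⟩ ?_
    rintro _ ⟨T, hT, rfl⟩
    have hlen : (T.length : ℝ) ≤ n + m := by exact_mod_cast hT.length_lt.le
    calc dtw n m π (fun j => σ j + q) - (n + m) * ‖τ - q‖
        ≤ (T.map fun p => ‖π p.1 - (σ p.2 + q)‖).sum - T.length * ‖τ - q‖ := by
          gcongr
          exact dtw_le_sum_map hT
      _ ≤ (T.map fun p => ‖π p.1 - (σ p.2 + τ)‖).sum := by
          linarith [sum_map_norm_sub_add_le T π σ τ q]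
  · have hempty : dtw n m π (fun j => σ j + q) = 0 := by
      rw [dtw]
      convert Real.sInf_empty
      refine Set.eq_empty_of_forall_notMem ?_
      rintro _ ⟨T, hT', -⟩
      exact hT ⟨T, hT'⟩
    rw [hempty]
    exact add_nonneg dtw_nonneg (by positivity)

end Translation

theorem EuclideanSpace.norm_le_sqrt_card_mul {ι : Type*} [Fintype ι] {r : ℝ} (hr : 0 ≤ r)
    (x : EuclideanSpace ℝ ι) (hx : ∀ i, ‖x i‖ ≤ r) : ‖x‖ ≤ √(Fintype.card ι) * r := by
  rw [EuclideanSpace.norm_eq, ← Real.sqrt_sq hr, ← Real.sqrt_mul (Nat.cast_nonneg _)]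
  gcongr
  calc ∑ i, ‖x i‖ ^ 2 ≤ ∑ _i : ι, r ^ 2 := by
        gcongr with i
        exact hx i
    _ = Fintype.card ι * r ^ 2 := by simp

theorem EuclideanSpace.exists_grid_norm_sub_le {ι : Type*} [Fintype ι] {g : ℝ} (hg : 0 < g)
    (τ : EuclideanSpace ℝ ι) :
    ∃ q : EuclideanSpace ℝ ι, (∀ i, ∃ k : ℤ, q i = k * g) ∧
      ‖τ - q‖ ≤ √(Fintype.card ι) * (g / 2) := by
  refine ⟨WithLp.toLp 2 fun i => round (τ i / g) * g, fun i => ⟨_, rfl⟩, ?_⟩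
  refine EuclideanSpace.norm_le_sqrt_card_mul (by positivity) _ fun i => ?_
  calc ‖τ i - round (τ i / g) * g‖ = |(τ i / g - round (τ i / g)) * g| := by
        rw [Real.norm_eq_abs, sub_mul, div_mul_cancel₀ _ hg.ne']
    _ = |τ i / g - round (τ i / g)| * g := by rw [abs_mul, abs_of_pos hg]
    _ ≤ 1 / 2 * g := by gcongr; exact abs_sub_round _
    _ = g / 2 := by ring

/-- If some translation `τ ∈ ℝ²` achieves `d_DTW(π, σ + τ) ≤ δ`, then there is a point `q`
both of whose coordinates are integer multiples of `εδ/(4n)` with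
`d_DTW(π, σ + q) ≤ (1 + ε)δ`. -/
theorem grid_point_good_translation (n m : ℕ) (hm : 1 ≤ m) (hmn : m ≤ n)
    (π σ : ℕ → EuclideanSpace ℝ (Fin 2)) (δ ε : ℝ) (hδ : 0 < δ) (hε : 0 < ε)
    (h : ∃ τ : EuclideanSpace ℝ (Fin 2), dtw n m π (fun j => σ j + τ) ≤ δ) :
    ∃ q : EuclideanSpace ℝ (Fin 2),
      (∃ k : ℤ, q 0 = (k : ℝ) * (ε * δ / (4 * n))) ∧
      (∃ k : ℤ, q 1 = (k : ℝ) * (ε * δ / (4 * n))) ∧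
      dtw n m π (fun j => σ j + q) ≤ (1 + ε) * δ := by
  obtain ⟨τ, hτ⟩ := h
  have hn : (0 : ℝ) < n := by exact_mod_cast hm.trans hmn
  set g := ε * δ / (4 * n) with hg_def
  have hg : 0 < g := by positivity
  obtain ⟨q, hq, hgrid⟩ := EuclideanSpace.exists_grid_norm_sub_le hg τ
  have hτq : ‖τ - q‖ ≤ g := by
    have hsqrt : √2 ≤ 2 := Real.sqrt_le_iff.mpr (by norm_num)
    calc ‖τ - q‖ ≤ √2 * (g / 2) := by simpa using hgrid
      _ ≤ 2 * (g / 2) := by gcongr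
      _ = g := by ring
  refine ⟨q, hq 0, hq 1, ?_⟩
  calc dtw n m π (fun j => σ j + q) ≤ δ + (n + m) * g := by
        grw [dtw_add_le_dtw_add π σ τ q, hτ, hτq]
    _ ≤ δ + (n + n) * g := by gcongr
    _ = δ + ε * δ / 2 := by rw [hg_def]; field_simp; ring
    _ ≤ (1 + ε) * δ := by linarith [mul_pos hε hδ]
end

section
/- Fix p ∈ [1,∞) and equip ℝ² with the L_p norm. Let b > 0, let n ≥ 1, and let π and σ be curves in ℝ² with at most n vertices each, all of whose points lie in the closed L_p-ball of radius b centered at the origin. Let r := (5nb, 0), and let π' := r^{2n} ∘ π and σ' := r^{2n} ∘ σ be the curves obtained by prepending 2n copies of the point r to π and σ respectively. Then d_DTW^T(π', σ') = d_DTW(π, σ). -/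
open Finset

open scoped ENNReal

/-!
Translating by `τ = 0` and walking diagonally through the two copies of `r^{2n}` shows that
`d_DTW(π', σ')` is at most `d_DTW(π, σ)`. Conversely, collapse a traversal of `π'` and
`σ' + τ` onto index pairs of `π` and `σ` by `(i, j) ↦ (max (i - 2n) 1, max (j - 2n) 1)`,
keeping only the last pair of each run with the same image. The kept pairs form a traversal
of `π` and `σ` with fewer than `2n` pairs, none of them inside the block `[1, 2n]²`, and each
kept pair costs at most `‖τ‖` less than its image: a pair matching `r` with a point of `π` or
`σ` costs at least `‖r‖ - b ≥ 2b` before translation. The at least `2n` pairs inside the block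
each cost exactly `‖τ‖`, which pays for the loss.
-/

def TraversalStep (a b : ℕ × ℕ) : Prop :=
  b = (a.1 + 1, a.2) ∨ b = (a.1, a.2 + 1) ∨ b = (a.1 + 1, a.2 + 1)

namespace TraversalStep

variable {a b : ℕ × ℕ}

theorem le (h : TraversalStep a b) : a ≤ b := by
  rcases h with rfl | rfl | rfl <;> simp [Prod.le_def]

theorem add_lt_add (h : TraversalStep a b) : a.1 + a.2 < b.1 + b.2 := by
  rcases h with rfl | rfl | rfl <;> dsimp only <;> omega

theorem max_le_max_add_one (h : TraversalStep a b) : max b.1 b.2 ≤ max a.1 a.2 + 1 := by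
  rcases h with rfl | rfl | rfl <;> dsimp only <;> omega

end TraversalStep

theorem isTraversal_iff {n m : ℕ} {T : List (ℕ × ℕ)} :
    IsTraversal n m T ↔
      T.head? = some (1, 1) ∧ T.getLast? = some (n, m) ∧ T.IsChain TraversalStep := by
  refine and_congr_right fun _ => and_congr_right fun _ => ?_
  rw [List.isChain_iff_getElem]
  refine forall_congr' fun ℓ => forall_congr' fun hℓ => ?_
  simp only [List.getD_eq_getElem?_getD, List.getElem?_eq_getElem hℓ,
    List.getElem?_eq_getElem (Nat.lt_of_succ_lt hℓ), Option.getD_some]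
  rfl

theorem List.IsChain.length_add_le {α : Type*} {g : α → ℕ} {a : α} :
    ∀ {l : List α}, (a :: l).IsChain (fun x y => g x < g y) →
      (a :: l).length + g a ≤ g ((a :: l).getLast (List.cons_ne_nil a l)) + 1
  | [], _ => by simp [Nat.add_comm]
  | b :: l, h => by
    have := (List.isChain_cons_cons.1 h).2.length_add_le
    have := (List.isChain_cons_cons.1 h).1
    simp only [List.length_cons, List.getLast_cons_cons] at *
    omega

theorem List.IsChain.le_add_length_filter {α : Type*} {g : α → ℕ} {a : α} {v : ℕ} :
    ∀ {l : List α}, (a :: l).IsChain (fun x y => g y ≤ g x + 1) →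
      v ≤ g ((a :: l).getLast (List.cons_ne_nil a l)) →
      v + 1 ≤ g a + ((a :: l).filter fun x => g x ≤ v).length
  | [], _, hv => by
    rw [List.getLast_singleton] at hv
    by_cases ha : g a ≤ v <;> simp [ha] <;> omega
  | b :: l, h, hv => by
    have ih := (List.isChain_cons_cons.1 h).2.le_add_length_filter (v := v)
      (by simpa using hv)
    have := (List.isChain_cons_cons.1 h).1
    by_cases ha : g a ≤ v
    · rw [List.filter_cons_of_pos (by simpa using ha), List.length_cons]
      omega
    · omega

section Traversal

variable {n m : ℕ} {T : List (ℕ × ℕ)}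

theorem IsTraversal.mem_bounds (hT : IsTraversal n m T) {q : ℕ × ℕ} (hq : q ∈ T) :
    1 ≤ q.1 ∧ 1 ≤ q.2 ∧ q.1 ≤ n ∧ q.2 ≤ m := by
  obtain ⟨hhead, hlast, hchain⟩ := isTraversal_iff.1 hT
  have hpw := (hchain.imp fun _ _ h => h.le).pairwise
  have h1 := hpw.rel_head hq
  have h2 := hpw.rel_getLast hq
  rw [(List.head_eq_iff_head?_eq_some _).2 hhead] at h1
  rw [(List.getLast_eq_iff_getLast?_eq_some _).2 hlast] at h2
  simp only [Prod.le_def] at h1 h2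
  omega

theorem IsTraversal.length_lt_s18 (hT : IsTraversal n m T) : T.length < n + m := by
  obtain ⟨hhead, hlast, hchain⟩ := isTraversal_iff.1 hT
  obtain ⟨l, rfl⟩ := List.head?_eq_some_iff.1 hhead
  have := (hchain.imp fun _ _ h => h.add_lt_add).length_add_le
  rw [(List.getLast_eq_iff_getLast?_eq_some _).2 hlast] at this
  simp only at this
  omega

theorem IsTraversal.le_length_filter (hT : IsTraversal n m T) {d : ℕ} (hd : d ≤ max n m) :
    d ≤ (T.filter fun q => max q.1 q.2 ≤ d).length := by
  obtain ⟨hhead, hlast, hchain⟩ := isTraversal_iff.1 hT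
  obtain ⟨l, rfl⟩ := List.head?_eq_some_iff.1 hhead
  have := (hchain.imp fun _ _ h => h.max_le_max_add_one).le_add_length_filter (v := d)
    (by rwa [(List.getLast_eq_iff_getLast?_eq_some _).2 hlast])
  simp only at this
  omega

theorem IsTraversal.append {n' m' : ℕ} {U : List (ℕ × ℕ)} (hT : IsTraversal n m T)
    (hU : U.IsChain TraversalStep) (hstep : ∀ q ∈ U.head?, TraversalStep (n, m) q)
    (hlast : U.getLast? = some (n', m')) : IsTraversal n' m' (T ++ U) := by
  obtain ⟨hThead, hTlast, hTchain⟩ := isTraversal_iff.1 hT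
  refine isTraversal_iff.2 ⟨?_, ?_, List.isChain_append.2 ⟨hTchain, hU, ?_⟩⟩
  · rwa [List.head?_append_of_ne_nil _ (List.ne_nil_of_mem (List.mem_of_mem_head? hThead))]
  · rwa [List.getLast?_append_of_ne_nil _ (List.ne_nil_of_mem (List.mem_of_mem_getLast? hlast))]
  · simpa [hTlast] using hstep

theorem exists_isTraversal (hn : 1 ≤ n) (hm : 1 ≤ m) : ∃ T, IsTraversal n m T := by
  induction n, hn using Nat.le_induction with
  | base =>
    induction m, hm using Nat.le_induction with
    | base => exact ⟨[(1, 1)], isTraversal_iff.2 ⟨rfl, rfl, List.isChain_singleton _⟩⟩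
    | succ m _ ih =>
      obtain ⟨T, hT⟩ := ih
      exact ⟨_, hT.append (List.isChain_singleton (1, m + 1))
        (by simp [TraversalStep]) rfl⟩
  | succ n _ ih =>
    obtain ⟨T, hT⟩ := ih
    exact ⟨_, hT.append (List.isChain_singleton (n + 1, m)) (by simp [TraversalStep]) rfl⟩

variable {E : Type*} [NormedAddCommGroup E] {π σ : ℕ → E}

theorem dtw_le_of_isTraversal (hT : IsTraversal n m T) :
    dtw n m π σ ≤ (T.map fun q => ‖π q.1 - σ q.2‖).sum :=
  csInf_le ⟨0, by
    rintro _ ⟨T', -, rfl⟩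
    exact List.sum_nonneg fun x hx => by
      obtain ⟨q, -, rfl⟩ := List.mem_map.1 hx
      exact norm_nonneg _⟩ ⟨T, hT, rfl⟩

theorem le_dtw_of_forall {c : ℝ} (hn : 1 ≤ n) (hm : 1 ≤ m)
    (h : ∀ T, IsTraversal n m T → c ≤ (T.map fun q => ‖π q.1 - σ q.2‖).sum) :
    c ≤ dtw n m π σ := by
  obtain ⟨T, hT⟩ := exists_isTraversal hn hm
  refine le_csInf ⟨_, T, hT, rfl⟩ ?_
  rintro _ ⟨T, hT, rfl⟩
  exact h T hT

end Traversal

section RunEnds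

variable {α β : Type*} [DecidableEq β] (φ : α → β)

def runEnds : List α → List α
  | [] => []
  | [a] => [a]
  | a :: b :: l => if φ a = φ b then runEnds (b :: l) else a :: runEnds (b :: l)

theorem runEnds_sublist : ∀ l : List α, (runEnds φ l).Sublist l
  | [] => .slnil
  | [_] => .refl _
  | a :: b :: l => by
    rw [runEnds]
    split
    · exact (runEnds_sublist (b :: l)).cons a
    · exact (runEnds_sublist (b :: l)).cons_cons a

theorem getLast?_runEnds : ∀ l : List α, (runEnds φ l).getLast? = l.getLast?
  | [] => rfl
  | [_] => rfl
  | a :: b :: l => by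
    rw [runEnds]
    split <;> simp [List.getLast?_cons, getLast?_runEnds (b :: l)]

theorem head?_map_runEnds : ∀ l : List α, ((runEnds φ l).map φ).head? = (l.map φ).head?
  | [] => rfl
  | [_] => rfl
  | a :: b :: l => by
    rw [runEnds]
    split
    · rw [head?_map_runEnds (b :: l)]
      simp [‹φ a = φ b›]
    · rfl

theorem isChain_map_runEnds {R : β → β → Prop} :
    ∀ {l : List α}, l.IsChain (fun a b => φ a = φ b ∨ R (φ a) (φ b)) →
      ((runEnds φ l).map φ).IsChain R
  | [], _ => .nil
  | [_], _ => .singleton _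
  | a :: b :: l, h => by
    obtain ⟨hab, h⟩ := List.isChain_cons_cons.1 h
    have ih := isChain_map_runEnds h
    rw [runEnds]
    split
    · exact ih
    · rw [List.map_cons, List.isChain_cons]
      refine ⟨fun c hc => ?_, ih⟩
      rw [head?_map_runEnds, List.map_cons, List.head?_cons, Option.mem_some_iff] at hc
      exact hc ▸ hab.resolve_left ‹_›

theorem not_of_mem_runEnds {Q : α → Prop} :
    ∀ {l : List α}, l.IsChain (fun a b => Q a → φ a = φ b) → (∀ x ∈ l.getLast?, ¬Q x) →
      ∀ x ∈ runEnds φ l, ¬Q x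
  | [], _, _ => by simp [runEnds]
  | [a], _, hlast => by simpa [runEnds] using hlast
  | a :: b :: l, h, hlast => by
    obtain ⟨hab, h⟩ := List.isChain_cons_cons.1 h
    have ih := not_of_mem_runEnds h (by simpa using hlast)
    rw [runEnds]
    split
    · exact ih
    · rintro x (_ | ⟨_, hx⟩)
      · exact fun hQ => ‹¬_› (hab hQ)
      · exact ih x hx

end RunEnds

def prepend {E : Type*} (d : ℕ) (r : E) (π : ℕ → E) : ℕ → E :=
  fun i => if i ≤ d then r else π (i - d)

section

variable {E : Type*} {d i : ℕ} {r : E} {π : ℕ → E}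

theorem prepend_of_le (h : i ≤ d) : prepend d r π i = r := if_pos h

theorem prepend_add (h : 1 ≤ i) : prepend d r π (d + i) = π i := by
  simp [prepend, Nat.one_le_iff_ne_zero.1 h]

end

def clampShift (d : ℕ) (q : ℕ × ℕ) : ℕ × ℕ :=
  (max (q.1 - d) 1, max (q.2 - d) 1)

theorem TraversalStep.clampShift_eq_or_step {a b : ℕ × ℕ} (d : ℕ) (h : TraversalStep a b) :
    clampShift d a = clampShift d b ∨ TraversalStep (clampShift d a) (clampShift d b) := by
  simp only [clampShift, TraversalStep, Prod.ext_iff]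
  rcases h with rfl | rfl | rfl <;> omega

theorem TraversalStep.clampShift_eq {a b : ℕ × ℕ} {d : ℕ} (h : TraversalStep a b)
    (ha : max a.1 a.2 ≤ d) : clampShift d a = clampShift d b := by
  simp only [clampShift, Prod.ext_iff]
  rcases h with rfl | rfl | rfl <;> omega

section ClampShift

variable {d n₁ n₂ : ℕ} {T : List (ℕ × ℕ)}

theorem IsTraversal.map_runEnds_clampShift (hT : IsTraversal (d + n₁) (d + n₂) T)
    (hn₁ : 1 ≤ n₁) (hn₂ : 1 ≤ n₂) :
    IsTraversal n₁ n₂ ((runEnds (clampShift d) T).map (clampShift d)) := by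
  obtain ⟨hhead, hlast, hchain⟩ := isTraversal_iff.1 hT
  refine isTraversal_iff.2 ⟨?_, ?_, isChain_map_runEnds _ <|
    hchain.imp fun _ _ h => h.clampShift_eq_or_step d⟩
  · rw [head?_map_runEnds, List.head?_map, hhead]
    simp [clampShift]
  · rw [List.getLast?_map, getLast?_runEnds, hlast]
    simp only [clampShift, Option.map_some, Nat.add_sub_cancel_left, Option.some.injEq,
      Prod.mk.injEq]
    omega

theorem IsTraversal.lt_max_of_mem_runEnds (hT : IsTraversal (d + n₁) (d + n₂) T)
    (hn₁ : 1 ≤ n₁) {q : ℕ × ℕ} (hq : q ∈ runEnds (clampShift d) T) : d < max q.1 q.2 := by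
  obtain ⟨-, hlast, hchain⟩ := isTraversal_iff.1 hT
  refine not_le.1 <| not_of_mem_runEnds _ (Q := fun q => max q.1 q.2 ≤ d)
    (hchain.imp fun _ _ => TraversalStep.clampShift_eq) ?_ q hq
  simp only [hlast, Option.mem_def, Option.some.injEq, forall_eq']
  omega

end ClampShift

section Prepend

variable {E : Type*} [NormedAddCommGroup E] {π σ : ℕ → E} {b : ℝ} {r : E} {d n₁ n₂ : ℕ}

theorem norm_sub_clampShift_le (hn₁ : 1 ≤ n₁) (hn₂ : 1 ≤ n₂)
    (hπ : ∀ i ∈ Icc 1 n₁, ‖π i‖ ≤ b) (hσ : ∀ j ∈ Icc 1 n₂, ‖σ j‖ ≤ b) (hr : 3 * b ≤ ‖r‖)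
    {q : ℕ × ℕ} (hq : d < max q.1 q.2) (hq₁ : q.1 ≤ d + n₁) (hq₂ : q.2 ≤ d + n₂) :
    ‖π (clampShift d q).1 - σ (clampShift d q).2‖ ≤
      ‖prepend d r π q.1 - prepend d r σ q.2‖ := by
  have hπ' i (h₁ : 1 ≤ i) (h₂ : i ≤ n₁) := hπ i (mem_Icc.2 ⟨h₁, h₂⟩)
  have hσ' j (h₁ : 1 ≤ j) (h₂ : j ≤ n₂) := hσ j (mem_Icc.2 ⟨h₁, h₂⟩)
  simp only [clampShift, prepend]
  by_cases h₁ : q.1 ≤ d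
  · have h₂ : ¬q.2 ≤ d := by omega
    rw [if_pos h₁, if_neg h₂, show max (q.1 - d) 1 = 1 by omega,
      show max (q.2 - d) 1 = q.2 - d by omega]
    have := hσ' (q.2 - d) (by omega) (by omega)
    have := hπ' 1 le_rfl hn₁
    have := norm_sub_le (π 1) (σ (q.2 - d))
    have := norm_sub_norm_le r (σ (q.2 - d))
    linarith
  by_cases h₂ : q.2 ≤ d
  · rw [if_neg h₁, if_pos h₂, show max (q.2 - d) 1 = 1 by omega,
      show max (q.1 - d) 1 = q.1 - d by omega, norm_sub_rev _ r]
    have := hπ' (q.1 - d) (by omega) (by omega)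
    have := hσ' 1 le_rfl hn₂
    have := norm_sub_le (π (q.1 - d)) (σ 1)
    have := norm_sub_norm_le r (π (q.1 - d))
    linarith
  rw [if_neg h₁, if_neg h₂, max_eq_left (by omega), max_eq_left (by omega)]

theorem dtw_le_dtw_prepend (hn₁ : 1 ≤ n₁) (hn₂ : 1 ≤ n₂) (hd : n₁ + n₂ ≤ d + 1)
    (hπ : ∀ i ∈ Icc 1 n₁, ‖π i‖ ≤ b) (hσ : ∀ j ∈ Icc 1 n₂, ‖σ j‖ ≤ b) (hr : 3 * b ≤ ‖r‖)
    (τ : E) :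
    dtw n₁ n₂ π σ ≤ dtw (d + n₁) (d + n₂) (prepend d r π) (fun j => prepend d r σ j + τ) := by
  refine le_dtw_of_forall (by omega) (by omega) fun T hT => ?_
  set f : ℕ × ℕ → ℝ := fun q => ‖prepend d r π q.1 - (prepend d r σ q.2 + τ)‖
  set block : ℕ × ℕ → Prop := fun q => max q.1 q.2 ≤ d
  set T' := runEnds (clampShift d) T
  have hT' := hT.map_runEnds_clampShift hn₁ hn₂
  have hT'_sublist : T'.Sublist (T.filter fun q => ¬block q) := by
    have := (runEnds_sublist (clampShift d) T).filter fun q => ¬block q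
    rwa [List.filter_eq_self.2 fun q hq => by simpa [block] using hT.lt_max_of_mem_runEnds hn₁ hq]
      at this
  have hT'_length : T'.length ≤ (T.filter block).length := by
    have : T'.length < n₁ + n₂ := by simpa using hT'.length_lt_s18
    exact le_trans (by omega) (hT.le_length_filter (by omega))
  have hf_block : ∀ q ∈ T.filter block, f q = ‖τ‖ := by
    intro q hq
    have hq : q.1 ≤ d ∧ q.2 ≤ d := by simpa [block] using (List.mem_filter.1 hq).2
    simp [f, prepend_of_le hq.1, prepend_of_le hq.2]
  calc dtw n₁ n₂ π σ
      ≤ (T'.map fun q => ‖π (clampShift d q).1 - σ (clampShift d q).2‖).sum := by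
        simpa [Function.comp_def] using dtw_le_of_isTraversal (π := π) (σ := σ) hT'
    _ ≤ (T'.map fun q => f q + ‖τ‖).sum := by
        refine List.sum_le_sum fun q hq => ?_
        obtain ⟨-, -, hq₁, hq₂⟩ := hT.mem_bounds ((runEnds_sublist _ T).subset hq)
        refine (norm_sub_clampShift_le hn₁ hn₂ hπ hσ hr (hT.lt_max_of_mem_runEnds hn₁ hq)
          hq₁ hq₂).trans ?_
        simpa using norm_sub_le_norm_sub_add_norm_sub (prepend d r π q.1)
          (prepend d r σ q.2 + τ) (prepend d r σ q.2)
    _ = (T'.map f).sum + T'.length * ‖τ‖ := by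
        simp [List.sum_map_add]
    _ ≤ ((T.filter fun q => ¬block q).map f).sum + (T.filter block).length * ‖τ‖ := by
        gcongr
        exact (hT'_sublist.map f).sum_le_sum (List.forall_mem_map.2 fun _ _ => norm_nonneg _)
    _ = ((T.filter fun q => ¬block q).map f).sum + ((T.filter block).map f).sum := by
        rw [List.map_congr_left hf_block, List.map_const', List.sum_replicate, nsmul_eq_mul]
    _ = (T.map f).sum := by
        rw [add_comm, List.sum_map_filter_add_sum_map_filter_not]

end Prepend

theorem dtw_prepend_le {E : Type*} [NormedAddCommGroup E] {d n₁ n₂ : ℕ} (hd : 1 ≤ d)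
    (hn₁ : 1 ≤ n₁) (hn₂ : 1 ≤ n₂) (r : E) (π σ : ℕ → E) :
    dtw (d + n₁) (d + n₂) (prepend d r π) (prepend d r σ) ≤ dtw n₁ n₂ π σ := by
  refine le_dtw_of_forall hn₁ hn₂ fun T hT => ?_
  obtain ⟨D, hD⟩ := exists_isTraversal hd hd
  obtain ⟨hhead, hlast, hchain⟩ := isTraversal_iff.1 hT
  set shift : ℕ × ℕ → ℕ × ℕ := fun q => (d + q.1, d + q.2)
  have hDT : IsTraversal (d + n₁) (d + n₂) (D ++ T.map shift) := by
    refine hD.append (List.isChain_map _ |>.2 <| hchain.imp fun a b h => ?_)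
      (by simp [hhead, shift, TraversalStep]) (by simp [hlast, shift])
    simp only [TraversalStep, shift, Prod.ext_iff] at h ⊢
    omega
  refine (dtw_le_of_isTraversal hDT).trans_eq ?_
  rw [List.map_append, List.sum_append, List.sum_eq_zero, zero_add, List.map_map]
  · refine congrArg List.sum (List.map_congr_left fun q hq => ?_)
    obtain ⟨h₁, h₂, -, -⟩ := hT.mem_bounds hq
    simp [shift, prepend_add h₁, prepend_add h₂]
  · intro x hx
    obtain ⟨q, hq, rfl⟩ := List.mem_map.1 hx
    obtain ⟨-, -, h₁, h₂⟩ := hD.mem_bounds hq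
    simp [prepend_of_le h₁, prepend_of_le h₂]

theorem dtwT_prepended_eq_general (p : ℝ≥0∞) [Fact (1 ≤ p)]
    (b : ℝ) (hb : 0 < b) (n n₁ n₂ : ℕ) (hn : 1 ≤ n)
    (hn₁ : 1 ≤ n₁) (hn₁n : n₁ ≤ n) (hn₂ : 1 ≤ n₂) (hn₂n : n₂ ≤ n)
    (π σ : ℕ → PiLp p fun _ : Fin 2 => ℝ)
    (hπ : ∀ i ∈ Finset.Icc 1 n₁, ‖π i‖ ≤ b) (hσ : ∀ j ∈ Finset.Icc 1 n₂, ‖σ j‖ ≤ b)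
    (r : PiLp p fun _ : Fin 2 => ℝ)
    (hr : r = (WithLp.equiv p (Fin 2 → ℝ)).symm ![5 * n * b, 0])
    (π' σ' : ℕ → PiLp p fun _ : Fin 2 => ℝ)
    (hπ' : ∀ i, π' i = if i ≤ 2 * n then r else π (i - 2 * n))
    (hσ' : ∀ j, σ' j = if j ≤ 2 * n then r else σ (j - 2 * n)) :
    sInf {c : ℝ | ∃ τ : PiLp p fun _ : Fin 2 => ℝ,
        dtw (2 * n + n₁) (2 * n + n₂) π' (fun j => σ' j + τ) = c} =
      dtw n₁ n₂ π σ := by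
  obtain rfl : π' = prepend (2 * n) r π := funext hπ'
  obtain rfl : σ' = prepend (2 * n) r σ := funext hσ'
  have hr_norm : 3 * b ≤ ‖r‖ := by
    have hr₀ : r.ofLp 0 = 5 * n * b := by simp [hr]
    have hn' : (1 : ℝ) ≤ n := by exact_mod_cast hn
    calc 3 * b ≤ 5 * n * b := by nlinarith
      _ ≤ ‖r.ofLp 0‖ := by rw [hr₀, Real.norm_eq_abs]; exact le_abs_self _
      _ ≤ ‖r‖ := PiLp.norm_apply_le r 0
  have lower τ := dtw_le_dtw_prepend (d := 2 * n) hn₁ hn₂ (by omega) hπ hσ hr_norm τ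
  refine IsLeast.csInf_eq ⟨⟨0, ?_⟩, ?_⟩
  · simp only [add_zero]
    exact le_antisymm (dtw_prepend_le (by omega) hn₁ hn₂ r π σ) (by simpa using lower 0)
  · rintro _ ⟨τ, rfl⟩
    exact lower τ

/-- Let `π, σ` be curves in `ℝ²` (with the `L_p` norm, `1 ≤ p < ∞`) with `n₁, n₂ ≤ n`
vertices, all points lying in the closed ball of radius `b` around the origin, and let
`π', σ'` be obtained from `π, σ` by prepending `2n` copies of the point `r = (5nb, 0)`.
Then DTW under translation of `π'` and `σ'` equals `d_DTW(π, σ)`. -/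
theorem dtwT_prepended_eq (p : ℝ≥0∞) [Fact (1 ≤ p)] (hp : p ≠ ⊤)
    (b : ℝ) (hb : 0 < b) (n n₁ n₂ : ℕ) (hn : 1 ≤ n)
    (hn₁ : 1 ≤ n₁) (hn₁n : n₁ ≤ n) (hn₂ : 1 ≤ n₂) (hn₂n : n₂ ≤ n)
    (π σ : ℕ → PiLp p fun _ : Fin 2 => ℝ)
    (hπ : ∀ i ∈ Finset.Icc 1 n₁, ‖π i‖ ≤ b) (hσ : ∀ j ∈ Finset.Icc 1 n₂, ‖σ j‖ ≤ b)
    (r : PiLp p fun _ : Fin 2 => ℝ)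
    (hr : r = (WithLp.equiv p (Fin 2 → ℝ)).symm ![5 * n * b, 0])
    (π' σ' : ℕ → PiLp p fun _ : Fin 2 => ℝ)
    (hπ' : ∀ i, π' i = if i ≤ 2 * n then r else π (i - 2 * n))
    (hσ' : ∀ j, σ' j = if j ≤ 2 * n then r else σ (j - 2 * n)) :
    sInf {c : ℝ | ∃ τ : PiLp p fun _ : Fin 2 => ℝ,
        dtw (2 * n + n₁) (2 * n + n₂) π' (fun j => σ' j + τ) = c} =
      dtw n₁ n₂ π σ :=
  dtwT_prepended_eq_general p b hb n n₁ n₂ hn hn₁ hn₁n hn₂ hn₂n π σ hπ hσ r hr π' σ' hπ' hσ'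
end
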